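/- Simulation Lemma (TV form): Let M = ⟨X, A, R, P, γ⟩ and M̂ = ⟨X, A, R̂, P̂, γ⟩ be two MDPs sharing a finite state space X and finite action space A, with discount γ ∈ [0,1), rewards bounded by |R(x,a)| ≤ R_max and |R̂(x,a)| ≤ R_max. Suppose for all (x,a): |R(x,a) − R̂(x,a)| ≤ ε_R and the ℓ1 distance ‖P(·|x,a) − P̂(·|x,a)‖₁ ≤ ε_P. Then for any stationary policy π, the discounted value functions satisfy sup_x |V_M^π(x) − V_M̂^π(x)| ≤ ε_R/(1−γ) + γ R_max ε_P/(1−γ)². -/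

import Mathlib

/-!
Fixing `π` turns both MDPs into Markov reward processes on `X`, with kernels
`P^π x x' = ∑ a, π x a * P x a x'` (`policyKernel`) at row-wise ℓ¹ distance at most `εP` and
rewards `r^π x = ∑ a, π x a * R x a` (`policyReward`) at distance at most `εR`. A stochastic
kernel does not increase ℓ¹ distances, so each step of the two chains adds at most `εP` to the
ℓ¹ distance of their state distributions, which is therefore at most `n * εP` at time `n`. The
expected rewards at time `n` then differ by at most `εR + Rmax * n * εP`, and summing against
`γ ^ n` gives `εR / (1 - γ) + γ * Rmax * εP / (1 - γ) ^ 2`.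
-/

open Finset Filter Topology

/-- The state distribution at time `n` when starting from state `x0`,
following policy `π` and transition kernel `P`. -/
noncomputable def stateDist {X A : Type*} [Fintype X] [Fintype A] [DecidableEq X]
    (P : X → A → X → ℝ) (π : X → A → ℝ) (x0 : X) : ℕ → X → ℝ
  | 0 => fun x => if x = x0 then 1 else 0
  | n + 1 => fun x' => ∑ x, ∑ a, stateDist P π x0 n x * π x a * P x a x'

/-- The infinite-horizon discounted value of stationary policy `π` in the MDP
with reward `R`, transition kernel `P`, and discount `γ`, starting from `x0`. -/
noncomputable def value {X A : Type*} [Fintype X] [Fintype A] [DecidableEq X]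
    (R : X → A → ℝ) (P : X → A → X → ℝ) (π : X → A → ℝ) (γ : ℝ) (x0 : X) : ℝ :=
  ∑' n : ℕ, γ ^ n * ∑ x, ∑ a, stateDist P π x0 n x * π x a * R x a

/-- The policy Bellman operator. -/
noncomputable def bellmanOp {X A : Type*} [Fintype X] [Fintype A]
    (R : X → A → ℝ) (P : X → A → X → ℝ) (π : X → A → ℝ) (γ : ℝ)
    (V : X → ℝ) : X → ℝ :=
  fun x => ∑ a, π x a * (R x a + γ * ∑ x', P x a x' * V x')

/-- The pushforward transition kernel induced by an encoder `Φ`. -/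
noncomputable def pushKernel {S A C : Type*} [Fintype S] [DecidableEq C]
    (P : S → A → S → ℝ) (Φ : S → C) : S → A → C → ℝ :=
  fun s a c => ∑ s', P s a s' * (if Φ s' = c then 1 else 0)

section ProbabilityVector
variable {ι : Type*} [Fintype ι]

lemma abs_sum_mul_le_of_abs_le {w f : ι → ℝ} {B : ℝ} (hw0 : ∀ i, 0 ≤ w i)
    (hw1 : ∑ i, w i = 1) (hf : ∀ i, |f i| ≤ B) : |∑ i, w i * f i| ≤ B :=
  calc |∑ i, w i * f i| ≤ ∑ i, w i * |f i| := by
        refine (abs_sum_le_sum_abs _ _).trans_eq (sum_congr rfl fun i _ => ?_)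
        rw [abs_mul, abs_of_nonneg (hw0 i)]
    _ ≤ ∑ i, w i * B := sum_le_sum fun i _ => mul_le_mul_of_nonneg_left (hf i) (hw0 i)
    _ = B := by rw [← sum_mul, hw1, one_mul]

lemma abs_sum_mul_sub_sum_mul_le {d d' r r' : ι → ℝ} {ε B : ℝ}
    (hd0 : ∀ i, 0 ≤ d i) (hd1 : ∑ i, d i = 1)
    (hr : ∀ i, |r i - r' i| ≤ ε) (hr' : ∀ i, |r' i| ≤ B) :
    |∑ i, d i * r i - ∑ i, d' i * r' i| ≤ ε + B * ∑ i, |d i - d' i| := by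
  have hsplit : ∑ i, d i * r i - ∑ i, d' i * r' i
      = ∑ i, d i * (r i - r' i) + ∑ i, (d i - d' i) * r' i := by
    simp only [mul_sub, sub_mul, sum_sub_distrib]
    ring
  have hmove : |∑ i, (d i - d' i) * r' i| ≤ B * ∑ i, |d i - d' i| :=
    calc |∑ i, (d i - d' i) * r' i| ≤ ∑ i, |d i - d' i| * |r' i| := by
          simpa only [abs_mul] using abs_sum_le_sum_abs (fun i => (d i - d' i) * r' i) univ
      _ ≤ ∑ i, |d i - d' i| * B := by gcongr with i; exact hr' i
      _ = B * ∑ i, |d i - d' i| := by rw [← sum_mul, mul_comm]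
  rw [hsplit]
  exact (abs_add_le _ _).trans (add_le_add (abs_sum_mul_le_of_abs_le hd0 hd1 hr) hmove)

lemma sum_abs_sum_mul_sub_sum_mul_le {κ : Type*} [Fintype κ] {d d' : ι → ℝ}
    {K K' : ι → κ → ℝ} {ε : ℝ} (hK0 : ∀ i j, 0 ≤ K i j) (hK1 : ∀ i, ∑ j, K i j = 1)
    (hd'0 : ∀ i, 0 ≤ d' i) (hd'1 : ∑ i, d' i = 1) (hKK' : ∀ i, ∑ j, |K i j - K' i j| ≤ ε) :
    ∑ j, |∑ i, d i * K i j - ∑ i, d' i * K' i j| ≤ ∑ i, |d i - d' i| + ε := by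
  have hpoint : ∀ i j, |d i * K i j - d' i * K' i j|
      ≤ |d i - d' i| * K i j + d' i * |K i j - K' i j| := fun i j => by
    calc |d i * K i j - d' i * K' i j| = |(d i - d' i) * K i j + d' i * (K i j - K' i j)| := by
          congr 1; ring
      _ ≤ _ := by
          refine (abs_add_le _ _).trans_eq ?_
          rw [abs_mul, abs_mul, abs_of_nonneg (hK0 i j), abs_of_nonneg (hd'0 i)]
  calc ∑ j, |∑ i, d i * K i j - ∑ i, d' i * K' i j|
      ≤ ∑ j, ∑ i, (|d i - d' i| * K i j + d' i * |K i j - K' i j|) := by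
        refine sum_le_sum fun j _ => ?_
        rw [← sum_sub_distrib]
        exact (abs_sum_le_sum_abs _ _).trans (sum_le_sum fun i _ => hpoint i j)
    _ = ∑ i, (|d i - d' i| * ∑ j, K i j + d' i * ∑ j, |K i j - K' i j|) := by
        rw [sum_comm]
        simp only [sum_add_distrib, mul_sum]
    _ ≤ ∑ i, (|d i - d' i| + d' i * ε) := by
        gcongr with i
        · rw [hK1, mul_one]
        · exact hd'0 i
        · exact hKK' i
    _ = ∑ i, |d i - d' i| + ε := by rw [sum_add_distrib, ← sum_mul, hd'1, one_mul]

end ProbabilityVector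

section PolicyChain
variable {X A : Type*} [Fintype A]

def policyKernel (P : X → A → X → ℝ) (π : X → A → ℝ) (x x' : X) : ℝ :=
  ∑ a, π x a * P x a x'

def policyReward (R : X → A → ℝ) (π : X → A → ℝ) (x : X) : ℝ :=
  ∑ a, π x a * R x a

variable {π : X → A → ℝ}

lemma policyKernel_nonneg {P : X → A → X → ℝ} (hπ0 : ∀ x a, 0 ≤ π x a)
    (hP0 : ∀ x a x', 0 ≤ P x a x') (x x' : X) : 0 ≤ policyKernel P π x x' :=
  sum_nonneg fun a _ => mul_nonneg (hπ0 x a) (hP0 x a x')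

lemma abs_policyReward_le {R : X → A → ℝ} {B : ℝ} (hπ0 : ∀ x a, 0 ≤ π x a)
    (hπ1 : ∀ x, ∑ a, π x a = 1) (hR : ∀ x a, |R x a| ≤ B) (x : X) :
    |policyReward R π x| ≤ B :=
  abs_sum_mul_le_of_abs_le (hπ0 x) (hπ1 x) (hR x)

lemma abs_policyReward_sub_le {R R' : X → A → ℝ} {ε : ℝ} (hπ0 : ∀ x a, 0 ≤ π x a)
    (hπ1 : ∀ x, ∑ a, π x a = 1) (hRR' : ∀ x a, |R x a - R' x a| ≤ ε) (x : X) :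
    |policyReward R π x - policyReward R' π x| ≤ ε := by
  simpa only [policyReward, ← sum_sub_distrib, ← mul_sub] using
    abs_sum_mul_le_of_abs_le (hπ0 x) (hπ1 x) (hRR' x)

variable [Fintype X]

lemma sum_policyKernel {P : X → A → X → ℝ} (hπ1 : ∀ x, ∑ a, π x a = 1)
    (hP1 : ∀ x a, ∑ x', P x a x' = 1) (x : X) : ∑ x', policyKernel P π x x' = 1 := by
  simp only [policyKernel]
  rw [sum_comm]
  simp only [← mul_sum, hP1, mul_one, hπ1]

lemma sum_abs_policyKernel_sub_le {P P' : X → A → X → ℝ} {ε : ℝ} (hπ0 : ∀ x a, 0 ≤ π x a)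
    (hπ1 : ∀ x, ∑ a, π x a = 1) (hPP' : ∀ x a, ∑ x', |P x a x' - P' x a x'| ≤ ε) (x : X) :
    ∑ x', |policyKernel P π x x' - policyKernel P' π x x'| ≤ ε :=
  calc ∑ x', |policyKernel P π x x' - policyKernel P' π x x'|
      ≤ ∑ x', ∑ a, π x a * |P x a x' - P' x a x'| := by
        refine sum_le_sum fun x' _ => ?_
        simp only [policyKernel, ← sum_sub_distrib, ← mul_sub]
        refine (abs_sum_le_sum_abs _ _).trans_eq (sum_congr rfl fun a _ => ?_)
        rw [abs_mul, abs_of_nonneg (hπ0 x a)]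
    _ = ∑ a, π x a * ∑ x', |P x a x' - P' x a x'| := by rw [sum_comm]; simp only [mul_sum]
    _ ≤ ∑ a, π x a * ε := by
        gcongr with a
        · exact hπ0 x a
        · exact hPP' x a
    _ = ε := by rw [← sum_mul, hπ1, one_mul]

variable [DecidableEq X] {P : X → A → X → ℝ} {x0 : X}

lemma stateDist_succ (n : ℕ) (x' : X) :
    stateDist P π x0 (n + 1) x' = ∑ x, stateDist P π x0 n x * policyKernel P π x x' := by
  simp only [stateDist, policyKernel, mul_sum, mul_assoc]

lemma value_eq_tsum (R : X → A → ℝ) (γ : ℝ) :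
    value R P π γ x0 = ∑' n, γ ^ n * ∑ x, stateDist P π x0 n x * policyReward R π x := by
  simp only [value, policyReward, mul_sum, mul_assoc]

lemma stateDist_nonneg (hπ0 : ∀ x a, 0 ≤ π x a) (hP0 : ∀ x a x', 0 ≤ P x a x') (n : ℕ)
    (x : X) : 0 ≤ stateDist P π x0 n x := by
  induction n generalizing x with
  | zero => simp only [stateDist]; positivity
  | succ n ih =>
    rw [stateDist_succ]
    exact sum_nonneg fun x' _ => mul_nonneg (ih x') (policyKernel_nonneg hπ0 hP0 x' x)

lemma sum_stateDist (hπ1 : ∀ x, ∑ a, π x a = 1) (hP1 : ∀ x a, ∑ x', P x a x' = 1) (n : ℕ) :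
    ∑ x, stateDist P π x0 n x = 1 := by
  induction n with
  | zero => simp [stateDist]
  | succ n ih =>
    simp only [stateDist_succ]
    rw [sum_comm]
    simp only [← mul_sum, sum_policyKernel hπ1 hP1, mul_one, ih]

lemma sum_abs_stateDist_sub_le {P' : X → A → X → ℝ} {ε : ℝ} (hπ0 : ∀ x a, 0 ≤ π x a)
    (hπ1 : ∀ x, ∑ a, π x a = 1) (hP0 : ∀ x a x', 0 ≤ P x a x')
    (hP1 : ∀ x a, ∑ x', P x a x' = 1) (hP'0 : ∀ x a x', 0 ≤ P' x a x')
    (hP'1 : ∀ x a, ∑ x', P' x a x' = 1) (hPP' : ∀ x a, ∑ x', |P x a x' - P' x a x'| ≤ ε)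
    (n : ℕ) : ∑ x, |stateDist P π x0 n x - stateDist P' π x0 n x| ≤ n * ε := by
  induction n with
  | zero => simp [stateDist]
  | succ n ih =>
    simp only [stateDist_succ]
    calc _ ≤ ∑ x, |stateDist P π x0 n x - stateDist P' π x0 n x| + ε :=
          sum_abs_sum_mul_sub_sum_mul_le (policyKernel_nonneg hπ0 hP0) (sum_policyKernel hπ1 hP1)
            (stateDist_nonneg hπ0 hP'0 n) (sum_stateDist hπ1 hP'1 n)
            (sum_abs_policyKernel_sub_le hπ0 hπ1 hPP')
      _ ≤ n * ε + ε := by gcongr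
      _ = (n + 1 : ℕ) * ε := by push_cast; ring

lemma summable_discounted_reward (R : X → A → ℝ) {γ : ℝ} (hγ0 : 0 ≤ γ) (hγ1 : γ < 1)
    (hπ0 : ∀ x a, 0 ≤ π x a) (hπ1 : ∀ x, ∑ a, π x a = 1) (hP0 : ∀ x a x', 0 ≤ P x a x')
    (hP1 : ∀ x a, ∑ x', P x a x' = 1) :
    Summable fun n => γ ^ n * ∑ x, stateDist P π x0 n x * policyReward R π x := by
  -- a reward on a finite state space is bounded by `∑ x, |r x|`
  set B := ∑ x, |policyReward R π x|
  refine .of_norm_bounded ((summable_geometric_of_lt_one hγ0 hγ1).mul_right B) fun n => ?_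
  rw [Real.norm_eq_abs, abs_mul, abs_of_nonneg (pow_nonneg hγ0 n)]
  gcongr
  exact abs_sum_mul_le_of_abs_le (stateDist_nonneg hπ0 hP0 n) (sum_stateDist hπ1 hP1 n)
    fun x => single_le_sum (f := fun x => |policyReward R π x|) (fun _ _ => abs_nonneg _)
      (mem_univ x)

end PolicyChain

lemma abs_tsum_geometric_mul_sub_le {γ a b : ℝ} {f g : ℕ → ℝ} (hγ0 : 0 ≤ γ) (hγ1 : γ < 1)
    (hf : Summable fun n => γ ^ n * f n) (hg : Summable fun n => γ ^ n * g n)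
    (hfg : ∀ n : ℕ, |f n - g n| ≤ a + b * n) :
    |∑' n, γ ^ n * f n - ∑' n, γ ^ n * g n| ≤ a / (1 - γ) + b * γ / (1 - γ) ^ 2 := by
  have hγ : ‖γ‖ < 1 := by rwa [Real.norm_eq_abs, abs_of_nonneg hγ0]
  have hbound := ((hasSum_geometric_of_lt_one hγ0 hγ1).mul_left a).add
    ((hasSum_coe_mul_geometric_of_norm_lt_one hγ).mul_left b)
  rw [show a * (1 - γ)⁻¹ + b * (γ / (1 - γ) ^ 2) = a / (1 - γ) + b * γ / (1 - γ) ^ 2 by ring]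
    at hbound
  rw [← hf.tsum_sub hg, ← Real.norm_eq_abs]
  refine tsum_of_norm_bounded hbound fun n => ?_
  rw [Real.norm_eq_abs, ← mul_sub, abs_mul, abs_of_nonneg (pow_nonneg hγ0 n)]
  calc γ ^ n * |f n - g n| ≤ γ ^ n * (a + b * n) := by gcongr; exact hfg n
    _ = a * γ ^ n + b * (n * γ ^ n) := by ring

theorem simulation_lemma_TV_general {X A : Type*} [Fintype X] [Fintype A] [DecidableEq X]
    (R R' : X → A → ℝ) (P P' : X → A → X → ℝ) (π : X → A → ℝ)
    (γ Rmax εR εP : ℝ) (hγ0 : 0 ≤ γ) (hγ1 : γ < 1)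
    (hπ0 : ∀ x a, 0 ≤ π x a) (hπ1 : ∀ x, ∑ a, π x a = 1)
    (hP0 : ∀ x a x', 0 ≤ P x a x') (hP1 : ∀ x a, ∑ x', P x a x' = 1)
    (hP'0 : ∀ x a x', 0 ≤ P' x a x') (hP'1 : ∀ x a, ∑ x', P' x a x' = 1)
    (hR' : ∀ x a, |R' x a| ≤ Rmax)
    (hεR : ∀ x a, |R x a - R' x a| ≤ εR)
    (hεP : ∀ x a, ∑ x', |P x a x' - P' x a x'| ≤ εP) :
    ∀ x, |value R P π γ x - value R' P' π γ x| ≤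
      εR / (1 - γ) + γ * Rmax * εP / (1 - γ) ^ 2 := by
  intro x0
  obtain ⟨a0⟩ : Nonempty A := by
    by_contra hA
    simpa [not_nonempty_iff.mp hA] using hπ1 x0
  have hRmax : 0 ≤ Rmax := (abs_nonneg _).trans (hR' x0 a0)
  rw [value_eq_tsum, value_eq_tsum]
  refine (abs_tsum_geometric_mul_sub_le (a := εR) (b := Rmax * εP) hγ0 hγ1
    (summable_discounted_reward R hγ0 hγ1 hπ0 hπ1 hP0 hP1)
    (summable_discounted_reward R' hγ0 hγ1 hπ0 hπ1 hP'0 hP'1) fun n => ?_).trans_eq (by ring)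
  calc _ ≤ εR + Rmax * ∑ x, |stateDist P π x0 n x - stateDist P' π x0 n x| :=
        abs_sum_mul_sub_sum_mul_le (stateDist_nonneg hπ0 hP0 n) (sum_stateDist hπ1 hP1 n)
          (abs_policyReward_sub_le hπ0 hπ1 hεR) (abs_policyReward_le hπ0 hπ1 hR')
    _ ≤ εR + Rmax * (n * εP) := by
        gcongr
        exact sum_abs_stateDist_sub_le hπ0 hπ1 hP0 hP1 hP'0 hP'1 hεP n
    _ = εR + Rmax * εP * n := by ring

theorem simulation_lemma_TV {X A : Type*} [Fintype X] [Fintype A] [DecidableEq X]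
    (R R' : X → A → ℝ) (P P' : X → A → X → ℝ) (π : X → A → ℝ)
    (γ Rmax εR εP : ℝ) (hγ0 : 0 ≤ γ) (hγ1 : γ < 1)
    (hπ0 : ∀ x a, 0 ≤ π x a) (hπ1 : ∀ x, ∑ a, π x a = 1)
    (hP0 : ∀ x a x', 0 ≤ P x a x') (hP1 : ∀ x a, ∑ x', P x a x' = 1)
    (hP'0 : ∀ x a x', 0 ≤ P' x a x') (hP'1 : ∀ x a, ∑ x', P' x a x' = 1)
    (hR : ∀ x a, |R x a| ≤ Rmax) (hR' : ∀ x a, |R' x a| ≤ Rmax)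
    (hεR : ∀ x a, |R x a - R' x a| ≤ εR)
    (hεP : ∀ x a, ∑ x', |P x a x' - P' x a x'| ≤ εP) :
    ∀ x, |value R P π γ x - value R' P' π γ x| ≤
      εR / (1 - γ) + γ * Rmax * εP / (1 - γ) ^ 2 :=
  simulation_lemma_TV_general R R' P P' π γ Rmax εR εP hγ0 hγ1 hπ0 hπ1 hP0 hP1 hP'0 hP'1 hR' hεR hεP
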